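/- arXiv:1805.10693 — 8 statements merged into one kernel-verified Lean document; each statement's English description precedes it below -/
import Mathlib

section
/- Suppose a mechanism π : ℝ → ℝ for a single agent with single-peaked preferences is continuous, and for every y ∈ ℝ either π(y) = y or π is locally constant at y. Then there exist constants α¹, α² ∈ ℝ ∪ {-∞, ∞} such that for all y ∈ ℝ, π(y) = med(y, α¹, α²). -/
/-!
Let `S` be the set of fixed points of `π`; it is closed. If `y ∉ S` has a fixed point below it,
let `u` be the largest fixed point below `y`. On `(u, y]` there are no fixed points, so `π` is
locally constant there, hence constant on this connected set and, by continuity, on `[u, y]`;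
thus `π y = π u = u`, which lies below `y` and above every fixed point below `y`. Symmetrically
from above. So a non-fixed point cannot lie between two fixed points, `S` is an interval, and
`π` maps each point outside it to the nearest endpoint; if `S = ∅`, `π` is constant.
-/

/-- `f` is locally constant at `x`: constant on some closed interval `[x-ε, x+ε]`. -/
def LocallyConstantAt (f : ℝ → ℝ) (x : ℝ) : Prop :=
  ∃ ε > 0, ∀ x' ∈ Set.Icc (x - ε) (x + ε), f x' = f x

open Function Set Filter Topology

theorem LocallyConstantAt.eventually_eq {f : ℝ → ℝ} {x : ℝ} (hf : LocallyConstantAt f x) :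
    ∀ᶠ y in 𝓝 x, f y = f x := by
  obtain ⟨ε, hε, hconst⟩ := hf
  filter_upwards [Icc_mem_nhds (sub_lt_self x hε) (lt_add_of_pos_right x hε)] using hconst

theorem LocallyConstantAt.neg_comp_neg {f : ℝ → ℝ} {x : ℝ} (hf : LocallyConstantAt f (-x)) :
    LocallyConstantAt (fun t => -f (-t)) x := by
  obtain ⟨ε, hε, hconst⟩ := hf
  refine ⟨ε, hε, fun t ⟨h₁, h₂⟩ => ?_⟩
  show -f (-t) = -f (-x)
  rw [hconst (-t) ⟨by linarith, by linarith⟩]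

theorem IsPreconnected.apply_eq_of_locallyConstantAt {f : ℝ → ℝ} {s : Set ℝ}
    (hs : IsPreconnected s) (hf : ∀ x ∈ s, LocallyConstantAt f x) {x y : ℝ} (hx : x ∈ s)
    (hy : y ∈ s) : f x = f y :=
  hs.induction₂ (fun a b => f a = f b)
    (fun a ha => nhdsWithin_le_nhds ((hf a ha).eventually_eq.mono fun _ h => h.symm))
    (fun _ _ _ _ _ _ => Eq.trans) (fun _ _ _ _ => Eq.symm) hx hy

theorem IsPreconnected.apply_eq_of_mem_closure {f : ℝ → ℝ} (hcont : Continuous f) {s : Set ℝ}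
    (hs : IsPreconnected s) (hf : ∀ x ∈ s, LocallyConstantAt f x) {x y : ℝ} (hx : x ∈ s)
    (hy : y ∈ closure s) : f y = f x :=
  EqOn.closure (fun _ hz => hs.apply_eq_of_locallyConstantAt hf hz hx) hcont continuous_const hy

section

variable {f : ℝ → ℝ} (hcont : Continuous f) (h : ∀ y, IsFixedPt f y ∨ LocallyConstantAt f y)
include hcont h

theorem isFixedPt_apply_of_isFixedPt_lt {x y : ℝ} (hx : IsFixedPt f x) (hy : ¬IsFixedPt f y)
    (hxy : x < y) : IsFixedPt f (f y) ∧ f y ∈ Ico x y := by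
  have hK : IsCompact (fixedPoints f ∩ Icc x y) :=
    isCompact_Icc.inter_left (isClosed_eq hcont continuous_id)
  set u := sSup (fixedPoints f ∩ Icc x y)
  obtain ⟨hu, hxu, huy⟩ : u ∈ fixedPoints f ∩ Icc x y := hK.sSup_mem ⟨x, hx, le_rfl, hxy.le⟩
  have huy : u < y := huy.lt_of_ne fun e => hy (e ▸ hu)
  have hgap : ∀ z ∈ Ioc u y, LocallyConstantAt f z := fun z hz =>
    (h z).resolve_left fun hz' =>
      hz.1.not_ge (le_csSup hK.bddAbove ⟨hz', hxu.trans hz.1.le, hz.2⟩)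
  have hfy : f y = u := by
    rw [← isPreconnected_Ioc.apply_eq_of_mem_closure hcont hgap (right_mem_Ioc.2 huy)
      (by rw [closure_Ioc huy.ne]; exact left_mem_Icc.2 huy.le)]
    exact hu
  rw [hfy]
  exact ⟨hu, hxu, huy⟩

theorem isFixedPt_apply_of_lt_isFixedPt {x y : ℝ} (hx : IsFixedPt f x) (hy : ¬IsFixedPt f y)
    (hyx : y < x) : IsFixedPt f (f y) ∧ f y ∈ Ioc y x := by
  have := isFixedPt_apply_of_isFixedPt_lt (f := fun t => -f (-t)) (by fun_prop)
    (fun t => (h (-t)).imp (fun ht => by simp [IsFixedPt, ht.eq]) LocallyConstantAt.neg_comp_neg)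
    (x := -x) (y := -y) (by simp [IsFixedPt, hx.eq])
    (by simpa [IsFixedPt, neg_eq_iff_eq_neg] using hy) (neg_lt_neg hyx)
  obtain ⟨hfix, hle, hlt⟩ : f (f y) = f y ∧ f y ≤ x ∧ y < f y := by simpa [IsFixedPt] using this
  exact ⟨hfix, hlt, hle⟩

theorem isFixedPt_apply (hS : (fixedPoints f).Nonempty) (y : ℝ) : IsFixedPt f (f y) := by
  by_cases hy : IsFixedPt f y
  · rwa [hy.eq]
  obtain ⟨x, hx⟩ := hS
  rcases lt_or_gt_of_ne (fun e : x = y => hy (e ▸ hx)) with hxy | hyx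
  · exact (isFixedPt_apply_of_isFixedPt_lt hcont h hx hy hxy).1
  · exact (isFixedPt_apply_of_lt_isFixedPt hcont h hx hy hyx).1

theorem le_apply_of_apply_lt {y z : ℝ} (hy : f y < y) (hz : IsFixedPt f z) : z ≤ f y := by
  have hy' : ¬IsFixedPt f y := hy.ne
  rcases lt_or_gt_of_ne (fun e : z = y => hy' (e ▸ hz)) with hzy | hyz
  · exact (isFixedPt_apply_of_isFixedPt_lt hcont h hz hy' hzy).2.1
  · exact absurd (isFixedPt_apply_of_lt_isFixedPt hcont h hz hy' hyz).2.1 hy.not_gt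

theorem apply_le_of_lt_apply {y z : ℝ} (hy : y < f y) (hz : IsFixedPt f z) : f y ≤ z := by
  have hy' : ¬IsFixedPt f y := hy.ne'
  rcases lt_or_gt_of_ne (fun e : z = y => hy' (e ▸ hz)) with hzy | hyz
  · exact absurd (isFixedPt_apply_of_isFixedPt_lt hcont h hz hy' hzy).2.2 hy.not_gt
  · exact (isFixedPt_apply_of_lt_isFixedPt hcont h hz hy' hyz).2.2

end

theorem EReal.coe_eq_max_min_sSup_sInf {S : Set ℝ} {y p : ℝ} (hp : p ∈ S)
    (hlt : p < y → ∀ z ∈ S, z ≤ p) (hgt : y < p → ∀ z ∈ S, p ≤ z) :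
    (p : EReal) = max (min (y : EReal) (sSup ((↑) '' S))) (sInf ((↑) '' S)) := by
  have hinf : sInf ((↑) '' S) ≤ (p : EReal) := sInf_le (mem_image_of_mem _ hp)
  have hsup : (p : EReal) ≤ sSup ((↑) '' S) := le_sSup (mem_image_of_mem _ hp)
  rcases lt_trichotomy p y with hpy | rfl | hyp
  · have : sSup ((↑) '' S) = (p : EReal) :=
      hsup.antisymm' (sSup_le (forall_mem_image.2 fun z hz => EReal.coe_le_coe (hlt hpy z hz)))
    rw [this, min_eq_right (EReal.coe_le_coe hpy.le), max_eq_left hinf]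
  · rw [min_eq_left hsup, max_eq_left hinf]
  · have : sInf ((↑) '' S) = (p : EReal) :=
      hinf.antisymm (le_sInf (forall_mem_image.2 fun z hz => EReal.coe_le_coe (hgt hyp z hz)))
    rw [this, max_eq_right ((min_le_left _ _).trans (EReal.coe_le_coe hyp.le))]

/-- If `π` is continuous and at every point it either equals the identity or is locally
constant, then there are extended reals `α¹ ≤ α²` with `π y = med(y, α¹, α²)`
(expressed as `max (min y α²) α¹` in the extended reals). -/
theorem stmt0 (π : ℝ → ℝ) (hcont : Continuous π)
    (h : ∀ y : ℝ, π y = y ∨ LocallyConstantAt π y) :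
    ∃ a b : EReal, a ≤ b ∧ ∀ y : ℝ, (π y : EReal) = max (min (y : EReal) b) a := by
  rcases (fixedPoints π).eq_empty_or_nonempty with hS | hS
  · have hlc : ∀ y ∈ univ, LocallyConstantAt π y := fun y _ =>
      (h y).resolve_left fun hy => hS.subset hy
    refine ⟨π 0, π 0, le_rfl, fun y => ?_⟩
    rw [isPreconnected_univ.apply_eq_of_locallyConstantAt hlc (mem_univ y) (mem_univ 0),
      max_eq_right (min_le_right _ _)]
  · refine ⟨_, _, sInf_le_sSup (hS.image _), fun y =>
      EReal.coe_eq_max_min_sSup_sInf (isFixedPt_apply hcont h hS y)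
        (fun hy _ => le_apply_of_apply_lt hcont h hy)
        (fun hy _ => apply_le_of_lt_apply hcont h hy)⟩
end

section
/- If π : ℝ → ℝ is continuous, equals the identity outside the set O where it is locally constant, then O must be one of exactly five forms: ∅, ℝ, (-∞, a) for some a ∈ ℝ, (b, ∞) for some b ∈ ℝ, or (-∞, a) ∪ (b, ∞) for some reals a ≤ b. -/
/-!
The set `O` is open, so its complement `C` is closed. If `C` were not an interval, it would have a
gap: `c < d` in `C` with `(c, d) ⊆ O`. There `π' = 0`, so by the mean value theorem
`π d = π c`, whereas `π c = c < d = π d`. Hence `C` is a closed interval of `ℝ`, and `O` is its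
complement.
-/

open Set Filter Topology

theorem locallyConstantAt_iff_eventually {f : ℝ → ℝ} {x : ℝ} :
    LocallyConstantAt f x ↔ ∀ᶠ y in 𝓝 x, f y = f x :=
  (nhds_basis_Icc_pos x).eventually_iff.symm

theorem isOpen_setOf_locallyConstantAt (f : ℝ → ℝ) : IsOpen {x | LocallyConstantAt f x} := by
  simp only [locallyConstantAt_iff_eventually]
  refine isOpen_iff_mem_nhds.2 fun x hx => ?_
  filter_upwards [eventually_eventually_nhds.2 hx, hx] with z hz hzx
  exact hz.mono fun y hy => hy.trans hzx.symm

theorem LocallyConstantAt.hasDerivAt {f : ℝ → ℝ} {x : ℝ} (h : LocallyConstantAt f x) :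
    HasDerivAt f 0 x :=
  (hasDerivAt_const x (f x)).congr_of_eventuallyEq (locallyConstantAt_iff_eventually.1 h)

section

variable {α : Type*} [ConditionallyCompleteLinearOrder α] [TopologicalSpace α] [OrderTopology α]

theorem IsClosed.exists_Ioo_subset_compl {s : Set α} (hs : IsClosed s) {x y z : α}
    (hx : x ∈ s) (hz : z ∈ s) (hxy : x ≤ y) (hyz : y ≤ z) (hy : y ∉ s) :
    ∃ c ∈ s, ∃ d ∈ s, y ∈ Ioo c d ∧ Ioo c d ⊆ sᶜ := by
  have hbelow : BddAbove (s ∩ Iic y) := ⟨y, fun _ h => h.2⟩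
  have habove : BddBelow (s ∩ Ici y) := ⟨y, fun _ h => h.2⟩
  have hc := (hs.inter isClosed_Iic).csSup_mem ⟨x, hx, hxy⟩ hbelow
  have hd := (hs.inter isClosed_Ici).csInf_mem ⟨z, hz, hyz⟩ habove
  refine ⟨_, hc.1, _, hd.1, ⟨hc.2.lt_of_ne fun h => hy (h ▸ hc.1),
    hd.2.lt_of_ne' fun h => hy (h ▸ hd.1)⟩, fun t ht hts => ?_⟩
  rcases le_total t y with hty | hyt
  · exact ht.1.not_ge (le_csSup hbelow ⟨hts, hty⟩)
  · exact ht.2.not_ge (csInf_le habove ⟨hts, hyt⟩)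

theorem IsPreconnected.eq_empty_or_univ_or_Ici_or_Iic_or_Icc_of_isClosed {s : Set α}
    (hconn : IsPreconnected s) (hs : IsClosed s) :
    s = ∅ ∨ s = univ ∨ (∃ a, s = Ici a) ∨ (∃ b, s = Iic b) ∨ ∃ a b, a ≤ b ∧ s = Icc a b := by
  rcases s.eq_empty_or_nonempty with h | hne
  · exact Or.inl h
  have hInf : BddBelow s → sInf s ∈ s := hs.csInf_mem hne
  have hSup : BddAbove s → sSup s ∈ s := hs.csSup_mem hne
  set a := sInf s
  set b := sSup s
  rcases hconn.mem_intervals with h | h | h | h | h | h | h | h | h | h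
  · obtain ⟨w, hw⟩ := hne
    rw [h] at hw
    exact Or.inr <| Or.inr <| Or.inr <| Or.inr ⟨a, b, hw.1.trans hw.2, h⟩
  · have := hSup (h ▸ bddAbove_Ico); rw [h] at this; exact absurd this.2 (lt_irrefl b)
  · have := hInf (h ▸ bddBelow_Ioc); rw [h] at this; exact absurd this.1 (lt_irrefl a)
  · have := hInf (h ▸ bddBelow_Ioo); rw [h] at this; exact absurd this.1 (lt_irrefl a)
  · exact Or.inr <| Or.inr <| Or.inl ⟨a, h⟩
  · have := hInf (h ▸ bddBelow_Ioi); rw [h] at this; exact absurd this (lt_irrefl a)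
  · exact Or.inr <| Or.inr <| Or.inr <| Or.inl ⟨b, h⟩
  · have := hSup (h ▸ bddAbove_Iio); rw [h] at this; exact absurd this (lt_irrefl b)
  · exact Or.inr <| Or.inl h
  · exact Or.inl h

end

theorem ordConnected_compl_setOf_locallyConstantAt {π : ℝ → ℝ} (hcont : Continuous π)
    (hid : ∀ y, ¬LocallyConstantAt π y → π y = y) :
    {y | LocallyConstantAt π y}ᶜ.OrdConnected := by
  refine ⟨fun x hx z hz y hy => by_contra fun hyO => ?_⟩
  obtain ⟨c, hc, d, hd, hy, hgap⟩ := (isOpen_setOf_locallyConstantAt π).isClosed_compl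
    |>.exists_Ioo_subset_compl hx hz hy.1 hy.2 hyO
  have hcd : c < d := hy.1.trans hy.2
  obtain ⟨t, -, ht⟩ := exists_hasDerivAt_eq_slope π (fun _ => 0) hcd hcont.continuousOn
    fun t ht => LocallyConstantAt.hasDerivAt (not_not.1 (hgap ht))
  rw [hid c hc, hid d hd, div_self (sub_ne_zero.2 hcd.ne')] at ht
  exact zero_ne_one ht

/-- If `π` is continuous and equals the identity outside the set `O` of points where it is
locally constant, then `O` has one of exactly five forms. -/
theorem stmt3 (π : ℝ → ℝ) (hcont : Continuous π)
    (O : Set ℝ) (hO : O = {y : ℝ | LocallyConstantAt π y})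
    (hid : ∀ y ∉ O, π y = y) :
    O = ∅ ∨ O = Set.univ ∨ (∃ a : ℝ, O = Set.Iio a) ∨ (∃ b : ℝ, O = Set.Ioi b) ∨
      (∃ a b : ℝ, a ≤ b ∧ O = Set.Iio a ∪ Set.Ioi b) := by
  subst hO
  have hclosed := (isOpen_setOf_locallyConstantAt π).isClosed_compl
  have hconn := (ordConnected_compl_setOf_locallyConstantAt hcont hid).isPreconnected
  rw [← compl_compl {y | LocallyConstantAt π y}]
  rcases hconn.eq_empty_or_univ_or_Ici_or_Iic_or_Icc_of_isClosed hclosed with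
    h | h | ⟨a, h⟩ | ⟨b, h⟩ | ⟨a, b, hab, h⟩ <;> rw [h]
  · exact Or.inr <| Or.inl compl_empty
  · exact Or.inl compl_univ
  · exact Or.inr <| Or.inr <| Or.inl ⟨a, compl_Ici⟩
  · exact Or.inr <| Or.inr <| Or.inr <| Or.inl ⟨b, compl_Iic⟩
  · refine Or.inr <| Or.inr <| Or.inr <| Or.inr ⟨a, b, hab, ?_⟩
    ext; simp [or_iff_not_imp_left]
end

section
/- (Hyperplane Comparison Lemma) Let x₁, …, x_n ∈ ℝᵈ be public points and S₁, …, S_{d+1} ⊆ [n] be nonempty pairwise disjoint index sets such that the point sets X_t = {x_i : i ∈ S_t} are well separable in ℝᵈ. Then for any two distinct affine functions β¹, β² : ℝᵈ → ℝ (i.e., β(x) = ⟨β₁, x⟩ + β₀ with (β₁, β₀) distinct), there exists t ∈ [d+1] such that either β¹(x_i) < β²(x_i) for all i ∈ S_t, or β¹(x_i) > β²(x_i) for all i ∈ S_t. -/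
/-- Evaluation of the affine function `β(p) = ⟨β₁, p⟩ + β₀`. -/
def affEval {d : ℕ} (β : (Fin d → ℝ) × ℝ) (p : Fin d → ℝ) : ℝ :=
  (∑ j, β.1 j * p j) + β.2

/-- The sets `X 0, …, X (m-1)` in `ℝᵈ` are well separable: for all disjoint index sets
`I, J`, some hyperplane strictly separates `⋃_{t ∈ I} X t` from `⋃_{t ∈ J} X t`. -/
def WellSeparable {d m : ℕ} (X : Fin m → Set (Fin d → ℝ)) : Prop :=
  ∀ I J : Finset (Fin m), Disjoint I J →
    ∃ (w : Fin d → ℝ) (c : ℝ),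
      (∀ t ∈ I, ∀ p ∈ X t, (∑ j, w j * p j) < c) ∧
      (∀ t ∈ J, ∀ p ∈ X t, c < (∑ j, w j * p j))

/-!
Put `φ = β² - β¹` and suppose every `conv X_t` meets the zero set of `φ`, say in `q_t`. The
`d + 1` points `q_t` are affinely independent: otherwise Radon's theorem splits them as
`I ⊔ Iᶜ` with `conv (q '' I) ∩ conv (q '' Iᶜ) ≠ ∅`, which the hyperplane separating
`⋃_{t ∈ I} X_t` from `⋃_{t ∉ I} X_t` forbids. But `d + 1` affinely independent points do not fit
into the hyperplane `{φ = 0}` (and `φ` has no zeros at all if it is a nonzero constant). Hence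
`φ` has no zero on some `conv X_t`, so it has constant sign on `X_t`.
-/

theorem AffineIndependent.card_le_finrank_of_forall_map_eq {k V P ι : Type*} [Field k]
    [AddCommGroup V] [Module k V] [FiniteDimensional k V] [AddTorsor V P] [Fintype ι]
    {p : ι → P} (hp : AffineIndependent k p) (φ : P →ᵃ[k] k) (hφ : φ.linear ≠ 0) (c : k)
    (hc : ∀ i, φ (p i) = c) : Fintype.card ι ≤ Module.finrank k V := by
  cases isEmpty_or_nonempty ι
  · simp
  have hspan : vectorSpan k (Set.range p) ≤ LinearMap.ker φ.linear := by
    rw [vectorSpan_def, Submodule.span_le]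
    rintro _ ⟨_, ⟨i, rfl⟩, _, ⟨j, rfl⟩, rfl⟩
    simp [AffineMap.linearMap_vsub, hc]
  have hker : Module.finrank k (LinearMap.ker φ.linear) < Module.finrank k V :=
    Submodule.finrank_lt (mt LinearMap.ker_eq_top.1 hφ)
  have := hp.finrank_vectorSpan_add_one
  have := Submodule.finrank_mono hspan
  omega

theorem AffineMap.pos_or_neg_of_forall_mem_convexHull_ne_zero {𝕜 E : Type*} [Field 𝕜]
    [LinearOrder 𝕜] [IsStrictOrderedRing 𝕜] [AddCommGroup E] [Module 𝕜 E] (φ : E →ᵃ[𝕜] 𝕜)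
    {s : Set E} (h : ∀ p ∈ convexHull 𝕜 s, φ p ≠ 0) :
    (∀ p ∈ s, 0 < φ p) ∨ (∀ p ∈ s, φ p < 0) := by
  by_contra! ⟨⟨a, ha, hφa⟩, ⟨b, hb, hφb⟩⟩
  have hzero : (0 : 𝕜) ∈ φ '' convexHull 𝕜 s := by
    rw [φ.image_convexHull]
    refine segment_subset_convexHull (Set.mem_image_of_mem φ ha) (Set.mem_image_of_mem φ hb) ?_
    rw [segment_eq_uIcc]
    exact Set.mem_uIcc.2 (Or.inl ⟨hφa, hφb⟩)
  obtain ⟨p, hp, hp0⟩ := hzero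
  exact h p hp hp0

section WellSeparable

variable {d m : ℕ} {X : Fin m → Set (Fin d → ℝ)}

theorem WellSeparable.convexHull (hX : WellSeparable X) :
    WellSeparable fun t => convexHull ℝ (X t) := by
  intro I J hIJ
  obtain ⟨w, c, hI, hJ⟩ := hX I J hIJ
  let ℓ := dotProductEquiv ℝ (Fin d) w
  exact ⟨w, c, fun t ht => convexHull_min (hI t ht) (convex_halfSpace_lt ℓ.isLinear c),
    fun t ht => convexHull_min (hJ t ht) (convex_halfSpace_gt ℓ.isLinear c)⟩

theorem WellSeparable.affineIndependent (hX : WellSeparable X) {q : Fin m → Fin d → ℝ}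
    (hq : ∀ t, q t ∈ X t) : AffineIndependent ℝ q := by
  classical
  by_contra h
  obtain ⟨I, p, hpI, hpJ⟩ := Convex.radon_partition h
  obtain ⟨w, c, hI, hJ⟩ := hX I.toFinset Iᶜ.toFinset (by simpa using disjoint_compl_right)
  let ℓ := dotProductEquiv ℝ (Fin d) w
  have hltI : ℓ p < c := by
    refine convexHull_min ?_ (convex_halfSpace_lt ℓ.isLinear c) hpI
    rintro _ ⟨t, ht, rfl⟩
    exact hI t (by simpa using ht) _ (hq t)
  have hgtJ : c < ℓ p := by
    refine convexHull_min ?_ (convex_halfSpace_gt ℓ.isLinear c) hpJ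
    rintro _ ⟨t, ht, rfl⟩
    exact hJ t (by simpa using ht) _ (hq t)
  exact lt_asymm hltI hgtJ

end WellSeparable

theorem WellSeparable.exists_forall_ne_zero {d : ℕ}
    {X : Fin (d + 1) → Set (Fin d → ℝ)} (hX : WellSeparable X) {φ : (Fin d → ℝ) →ᵃ[ℝ] ℝ}
    (hφ : φ ≠ 0) : ∃ t, ∀ p ∈ X t, φ p ≠ 0 := by
  by_cases hlin : φ.linear = 0
  · obtain ⟨c, rfl⟩ := φ.linear_eq_zero_iff_exists_const.1 hlin
    refine ⟨0, fun p _ => ?_⟩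
    rintro rfl
    exact hφ (AffineMap.ext fun _ => rfl)
  by_contra! h
  choose q hqX hq using h
  have := (hX.affineIndependent hqX).card_le_finrank_of_forall_map_eq φ hlin 0 hq
  simp at this

def affEvalMap {d : ℕ} (β : (Fin d → ℝ) × ℝ) : (Fin d → ℝ) →ᵃ[ℝ] ℝ :=
  (dotProductEquiv ℝ (Fin d) β.1).toAffineMap + AffineMap.const ℝ _ β.2

@[simp]
theorem affEvalMap_apply {d : ℕ} (β : (Fin d → ℝ) × ℝ) (p : Fin d → ℝ) :
    affEvalMap β p = affEval β p :=
  rfl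

theorem affEvalMap_injective {d : ℕ} : Function.Injective (affEvalMap (d := d)) := by
  intro β β' h
  have h2 : β.2 = β'.2 := by simpa [affEval] using congr($h 0)
  have h1 : β.1 = β'.1 := by
    funext j
    simpa [affEval, h2, Pi.single_apply] using congr($h (Pi.single j 1))
  exact Prod.ext h1 h2

theorem stmt5_general (d n : ℕ) (x : Fin n → Fin d → ℝ) (S : Fin (d + 1) → Finset (Fin n))
    (hsep : WellSeparable (fun t => x '' ↑(S t)))
    (β1 β2 : (Fin d → ℝ) × ℝ) (hβ : β1 ≠ β2) :
    ∃ t, (∀ i ∈ S t, affEval β1 (x i) < affEval β2 (x i)) ∨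
         (∀ i ∈ S t, affEval β2 (x i) < affEval β1 (x i)) := by
  set φ := affEvalMap β2 - affEvalMap β1
  have hφ : φ ≠ 0 := sub_ne_zero.2 (affEvalMap_injective.ne hβ.symm)
  obtain ⟨t, ht⟩ := hsep.convexHull.exists_forall_ne_zero hφ
  refine ⟨t, (φ.pos_or_neg_of_forall_mem_convexHull_ne_zero ht).imp
    (fun h i hi => ?_) (fun h i hi => ?_)⟩ <;>
  simpa [φ] using h (x i) (Set.mem_image_of_mem x hi)

/-- Hyperplane Comparison Lemma: given publicly separable sets of agents and two distinct
affine functions, on some set `S t` one of the two functions is pointwise strictly below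
the other. -/
theorem stmt5 (d n : ℕ) (x : Fin n → Fin d → ℝ) (S : Fin (d + 1) → Finset (Fin n))
    (hne : ∀ t, (S t).Nonempty)
    (hdisj : ∀ t t', t ≠ t' → Disjoint (S t) (S t'))
    (hsep : WellSeparable (fun t => x '' ↑(S t)))
    (β1 β2 : (Fin d → ℝ) × ℝ) (hβ : β1 ≠ β2) :
    ∃ t, (∀ i ∈ S t, affEval β1 (x i) < affEval β2 (x i)) ∨
         (∀ i ∈ S t, affEval β2 (x i) < affEval β1 (x i)) :=
  stmt5_general d n x S hsep β1 β2 hβ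
end

section
/- Impartial mechanisms of additive form: Fix x₁, …, x_n ∈ ℝᵈ. Suppose for each i ∈ [n] a function g_i : ℝ → ℝᵈ and a constant c ∈ ℝ are given, and M(y) = (β₁, β₀) with β₁ = Σ_i g_i(y_i) and β₀ = c − Σ_i ⟨g_i(y_i), x_i⟩. Then M is impartial: for every i, the outcome ŷ_i = ⟨β₁, x_i⟩ + β₀ does not depend on y_i. -/
open Function

theorem Fintype.sum_apply_update_of_eq {ι β M : Type*} [Fintype ι] [DecidableEq ι]
    [AddCommMonoid M] (φ : ι → β → M) (y : ι → β) (i : ι) (b : β) (h : φ i b = φ i (y i)) :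
    ∑ k, φ k (update y i b k) = ∑ k, φ k (y k) := by
  simp_rw [apply_update φ, h, update_eq_self]

theorem affEval_additive {ι : Type*} [Fintype ι] {d : ℕ} (x v : ι → Fin d → ℝ) (c : ℝ)
    (p : Fin d → ℝ) :
    affEval (fun j => ∑ k, v k j, c - ∑ k, ∑ j, v k j * x k j) p
      = c + ∑ k, ∑ j, v k j * (p j - x k j) := by
  simp only [affEval, Finset.sum_mul, mul_sub, Finset.sum_sub_distrib]
  rw [Finset.sum_comm]
  ring

/-- Mechanisms of the additive form `β₁ = Σᵢ gᵢ(yᵢ)`, `β₀ = c − Σᵢ ⟨gᵢ(yᵢ), xᵢ⟩` are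
impartial: the outcome `ŷᵢ = ⟨β₁, xᵢ⟩ + β₀` for agent `i` does not depend on `yᵢ`. -/
theorem stmt11 (d n : ℕ) (x : Fin n → Fin d → ℝ)
    (g : Fin n → ℝ → Fin d → ℝ) (c : ℝ)
    (M : (Fin n → ℝ) → (Fin d → ℝ) × ℝ)
    (hM : ∀ y : Fin n → ℝ,
      M y = (fun j => ∑ i, g i (y i) j, c - ∑ i, ∑ j, g i (y i) j * x i j)) :
    ∀ (y : Fin n → ℝ) (i : Fin n) (y' : ℝ),
      affEval (M (Function.update y i y')) (x i) = affEval (M y) (x i) := by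
  intro y i y'
  rw [hM, hM, affEval_additive, affEval_additive]
  congr 1
  exact Fintype.sum_apply_update_of_eq (fun k t => ∑ j, g k t j * (x i j - x k j)) y i y'
    (by simp)
end

section
/- Characterization of impartial mechanisms in simple linear regression: Let x₁, …, x_n ∈ ℝ be pairwise distinct with n ≥ 2. Suppose M : ℝⁿ → ℝ² returns a line (β₁(y), β₀(y)) such that for each i, the outcome ŷ_i(y) = β₁(y)·x_i + β₀(y) is independent of y_i. Then there exist functions g₁, …, g_n : ℝ → ℝ and a constant c ∈ ℝ such that β₁(y) = Σ_i g_i(y_i) and β₀(y) = c − Σ_i g_i(y_i)·x_i for all y. -/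
/-!
Writing `ŷᵢ(y) = β₁(y) xᵢ + β₀(y)`, the slope is `β₁ = (ŷₖ - ŷᵢ) / (xₖ - xᵢ)` for any `k ≠ i`.
Since `ŷᵢ` ignores `yᵢ` and `ŷₖ` ignores `yₖ`, the increment of `β₁` in the coordinate `yᵢ` does
not change when `yₖ` changes; hence `β₁` is additively separable, `β₁(y) = Σᵢ gᵢ(yᵢ)`.
Then `β₀(y) + Σⱼ gⱼ(yⱼ) xⱼ = ŷᵢ(y) + Σ_{j ≠ i} gⱼ(yⱼ) (xⱼ - xᵢ)` does not depend on `yᵢ`, for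
every `i`, so it is a constant.
-/

open Finset Function

section Separable

variable {ι α : Type*}

theorem eq_of_forall_update_eq [Finite ι] [DecidableEq ι] {β : Type*} {f : (ι → α) → β}
    (hf : ∀ y i a, f (update y i a) = f y) (y z : ι → α) : f y = f z := by
  have := Fintype.ofFinite ι
  have piecewise_eq : ∀ s : Finset ι, f (s.piecewise y z) = f z := by
    intro s
    induction s using Finset.induction_on with
    | empty => rw [piecewise_empty]
    | insert i s _ ih => rw [piecewise_insert, hf, ih]
  simpa using piecewise_eq univ

theorem sum_apply_update_sub [Fintype ι] [DecidableEq ι] {M : Type*} [AddCommGroup M]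
    (g : ι → α → M) (y : ι → α) (k : ι) (c : α) :
    ∑ i, g i (update y k c i) - ∑ i, g i (y i) = g k c - g k (y k) := by
  rw [← add_sum_erase _ _ (mem_univ k), ← add_sum_erase _ _ (mem_univ k),
    sum_congr rfl fun i hi => by rw [update_of_ne (ne_of_mem_erase hi)]]
  simp only [update_self]
  abel

variable {G : Type*} [AddCommGroup G]

def IsCompletelyAdditivelySeparable [DecidableEq ι] (f : (ι → α) → G) : Prop :=
  ∀ i a b y z, f (update y i a) - f (update y i b) = f (update z i a) - f (update z i b)

theorem isCompletelyAdditivelySeparable_of_update [Finite ι] [DecidableEq ι] {f : (ι → α) → G}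
    (hf : ∀ y i k, k ≠ i → ∀ a b c,
      f (update (update y k c) i a) - f (update (update y k c) i b) =
        f (update y i a) - f (update y i b)) :
    IsCompletelyAdditivelySeparable f := by
  intro i a b
  refine eq_of_forall_update_eq fun y k c => ?_
  obtain rfl | hk := eq_or_ne k i
  · simp only [update_idem]
  · exact hf y i k hk a b c

namespace IsCompletelyAdditivelySeparable

variable [Fintype ι] [DecidableEq ι] {f : (ι → α) → G}

theorem eq_add_sum (hf : IsCompletelyAdditivelySeparable f) (y₀ y : ι → α) :
    f y = f y₀ + ∑ i, (f (update y₀ i (y i)) - f y₀) := by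
  have piecewise_eq : ∀ s : Finset ι,
      f (s.piecewise y y₀) = f y₀ + ∑ i ∈ s, (f (update y₀ i (y i)) - f y₀) := by
    intro s
    induction s using Finset.induction_on with
    | empty => simp
    | insert i s hi ih =>
      have hw : s.piecewise y y₀ = update (s.piecewise y y₀) i (y₀ i) := by
        rw [eq_comm, update_eq_self_iff, piecewise_eq_of_notMem _ _ _ hi]
      have step := hf i (y i) (y₀ i) (s.piecewise y y₀) y₀
      rw [← hw, update_eq_self] at step
      rw [piecewise_insert, sum_insert hi, ← step, ih]
      abel
  simpa using piecewise_eq univ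

theorem exists_sum [Nonempty ι] (hf : IsCompletelyAdditivelySeparable f) (y₀ : ι → α) :
    ∃ g : ι → α → G, ∀ y, f y = ∑ i, g i (y i) := by
  obtain ⟨i₀⟩ := ‹Nonempty ι›
  refine ⟨fun i a => f (update y₀ i a) - f y₀ + (Pi.single i₀ (f y₀) : ι → G) i, fun y => ?_⟩
  rw [sum_add_distrib, sum_pi_single', if_pos (mem_univ _), hf.eq_add_sum y₀, add_comm]

end IsCompletelyAdditivelySeparable

end Separable

section Regression

variable {ι : Type*} [DecidableEq ι]

def IsImpartial (x : ι → ℝ) (β₁ β₀ : (ι → ℝ) → ℝ) : Prop :=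
  ∀ y i a, β₁ (update y i a) * x i + β₀ (update y i a) = β₁ y * x i + β₀ y

variable {x : ι → ℝ} {β₁ β₀ : (ι → ℝ) → ℝ}

theorem IsImpartial.isCompletelyAdditivelySeparable_slope [Finite ι] (h : IsImpartial x β₁ β₀)
    (hx : Injective x) : IsCompletelyAdditivelySeparable β₁ := by
  refine isCompletelyAdditivelySeparable_of_update fun y i k hk a b c => ?_
  have hxk : x k - x i ≠ 0 := sub_ne_zero.mpr (hx.ne hk)
  refine mul_right_cancel₀ hxk ?_
  -- `e1`, `e2`: `ŷₖ` ignores `yₖ`; the remaining four instances: `ŷᵢ` ignores `yᵢ`.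
  have e1 := h (update y i a) k c
  have e2 := h (update y i b) k c
  rw [update_comm hk.symm] at e1 e2
  linear_combination e1 - e2 - h (update y k c) i a + h (update y k c) i b + h y i a - h y i b

theorem IsImpartial.exists_intercept_eq [Fintype ι] (h : IsImpartial x β₁ β₀) {g : ι → ℝ → ℝ}
    (hg : ∀ y, β₁ y = ∑ i, g i (y i)) : ∃ c, ∀ y, β₀ y = c - ∑ i, g i (y i) * x i := by
  have invariant : ∀ y k c, β₀ (update y k c) + ∑ i, g i (update y k c i) * x i =
      β₀ y + ∑ i, g i (y i) * x i := by
    intro y k c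
    have hk := h y k c
    rw [hg, hg] at hk
    linear_combination hk + sum_apply_update_sub (fun i a => g i a * x i) y k c -
      x k * sum_apply_update_sub g y k c
  refine ⟨β₀ 0 + ∑ i, g i 0 * x i, fun y => ?_⟩
  linear_combination
    eq_of_forall_update_eq (f := fun y => β₀ y + ∑ i, g i (y i) * x i) invariant y 0

end Regression

/-- Characterization of impartial mechanisms for simple linear regression with distinct
x-coordinates: if the outcome `ŷᵢ = β₁(y)·xᵢ + β₀(y)` never depends on `yᵢ`, then
`β₁(y) = Σᵢ gᵢ(yᵢ)` and `β₀(y) = c − Σᵢ gᵢ(yᵢ)·xᵢ` for some functions `gᵢ` and constant `c`. -/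
theorem stmt12 (n : ℕ) (hn : 2 ≤ n) (x : Fin n → ℝ) (hx : Function.Injective x)
    (B1 B0 : (Fin n → ℝ) → ℝ)
    (himp : ∀ (y : Fin n → ℝ) (i : Fin n) (y' : ℝ),
      B1 (Function.update y i y') * x i + B0 (Function.update y i y') =
        B1 y * x i + B0 y) :
    ∃ (g : Fin n → ℝ → ℝ) (c : ℝ),
      ∀ y : Fin n → ℝ, B1 y = ∑ i, g i (y i) ∧ B0 y = c - ∑ i, g i (y i) * x i := by
  have : Nonempty (Fin n) := ⟨⟨0, by omega⟩⟩
  obtain ⟨g, hg⟩ := (IsImpartial.isCompletelyAdditivelySeparable_slope himp hx).exists_sum 0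
  obtain ⟨c, hc⟩ := IsImpartial.exists_intercept_eq himp hg
  exact ⟨g, c, fun y => ⟨hg y, hc y⟩⟩
end

section
/- Lower bound on efficiency: For the specific configuration x_i = i for i ∈ [n] (n ≥ 3) and x_{n+1} = X where X solves (n³−n)/(2(1+3n+2n²+6X²−6Xn−6X)) = 1, any strategyproof mechanism M for simple linear regression fails to be (2−ε)-efficient for every ε > 0. That is, there exists an input y such that RSS(M(y)) ≥ 2 · inf_β RSS(β) (with strict failure of any ratio below 2). -/
/-!
Put all responses at `0` except the last one, `Y`, reported by the agent at abscissa `X`.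
The defining equation of `X` makes the cheapest way for a line to pass through `(X, t)` cost
exactly `t²` on the first `n` points, so a line with value `t` at `X` has residual sum of squares
at least `t² + (Y - t)²`, with equality for some line. Hence the optimum is `Y² / 2`, and a line
costs at least `Y²` unless `t` lies strictly between `0` and `Y`. Strategyproofness restricted to
the last agent rules that out for some `Y > 0`: if the outcome `p` at report `1` lies in `(0, 1)`,
then reporting `p` must give outcome exactly `p`.
-/

/-- Outcome `a` is weakly preferred to outcome `b` under every single-peaked preference
with peak `p`: `a` lies weakly between `p` and `b`. -/
def WeaklyPrefers (p a b : ℝ) : Prop := (p ≤ a ∧ a ≤ b) ∨ (b ≤ a ∧ a ≤ p)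

open Finset

def rss {ι : Type*} [Fintype ι] (x y : ι → ℝ) (β : ℝ × ℝ) : ℝ :=
  ∑ i, (y i - (β.1 * x i + β.2)) ^ 2

lemma WeaklyPrefers.eq_of_right_eq {p a : ℝ} (h : WeaklyPrefers p a p) : a = p := by
  rcases h with ⟨h₁, h₂⟩ | ⟨h₁, h₂⟩ <;> linarith

lemma exists_pos_notMem_Ioo_of_weaklyPrefers {a : ℝ → ℝ}
    (ha : ∀ Y Y', WeaklyPrefers Y (a Y) (a Y')) : ∃ Y, 0 < Y ∧ a Y ∉ Set.Ioo 0 Y := by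
  by_cases h₁ : a 1 ∈ Set.Ioo 0 1
  · have hfix : a (a 1) = a 1 := (ha (a 1) 1).eq_of_right_eq
    exact ⟨a 1, h₁.1, by simp [hfix]⟩
  · exact ⟨1, one_pos, h₁⟩

lemma sum_range_affine_sq (n : ℕ) (u v : ℝ) :
    ∑ i ∈ range n, (u * (i + 1) + v) ^ 2
      = u ^ 2 * (n * (n + 1) * (2 * n + 1) / 6) + u * v * (n * (n + 1)) + n * v ^ 2 := by
  induction n with
  | zero => simp
  | succ k ih => rw [sum_range_succ, ih]; push_cast; ring

section BalancedAbscissa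

variable {n : ℕ} {X : ℝ}
  (hX : (n : ℝ) ^ 3 - n = 2 * (1 + 3 * n + 2 * (n : ℝ) ^ 2 + 6 * X ^ 2 - 6 * X * n - 6 * X))
include hX

lemma sub_one_mul_sum_fin_affine_sq (u v : ℝ) :
    (n - 1) * ∑ i : Fin n, (u * (i + 1) + v) ^ 2
      = ((n - 1) * v + (n * (n + 1) / 2 - X) * u) ^ 2 + (n - 1) * (u * X + v) ^ 2 := by
  rw [Fin.sum_univ_eq_sum_range (fun i => (u * (i + 1) + v) ^ 2), sum_range_affine_sq]
  linear_combination (n * u ^ 2 / 12) * hX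

lemma sq_le_sum_fin_affine_sq (hn : 2 ≤ n) (u v : ℝ) :
    (u * X + v) ^ 2 ≤ ∑ i : Fin n, (u * (i + 1) + v) ^ 2 := by
  have hn1 : (1 : ℝ) < n := by exact_mod_cast hn
  have h := sub_one_mul_sum_fin_affine_sq hX u v
  nlinarith [sq_nonneg ((n - 1) * v + (n * (n + 1) / 2 - X) * u)]

lemma exists_sum_fin_affine_sq_eq_sq (hn : 3 ≤ n) (t : ℝ) :
    ∃ u v : ℝ, u * X + v = t ∧ ∑ i : Fin n, (u * (i + 1) + v) ^ 2 = t ^ 2 := by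
  have hn3 : (3 : ℝ) ≤ n := by exact_mod_cast hn
  -- `X = (n + 1) / 2` would turn `hX` into `(n - 1) ^ 2 * (n + 1) = 0`.
  have hX_ne : X ≠ (n + 1) / 2 := by rintro rfl; nlinarith
  have hd : (n : ℝ) * (X - (n + 1) / 2) ≠ 0 := mul_ne_zero (by positivity) (sub_ne_zero.2 hX_ne)
  -- Choose the slope that makes the first square of `sub_one_mul_sum_fin_affine_sq` vanish.
  set u := (n - 1) * t / (n * (X - (n + 1) / 2))
  have hu : u * (n * (X - (n + 1) / 2)) = (n - 1) * t := div_mul_cancel₀ _ hd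
  refine ⟨u, t - u * X, by ring, ?_⟩
  have h := sub_one_mul_sum_fin_affine_sq hX u (t - u * X)
  rw [show (n - 1) * (t - u * X) + (n * (n + 1) / 2 - X) * u = 0 by linear_combination -hu,
    show u * X + (t - u * X) = t by ring] at h
  exact mul_left_cancel₀ (by linarith : (n : ℝ) - 1 ≠ 0) (by linarith)

variable {x : Fin (n + 1) → ℝ} (hx_cast : ∀ i : Fin n, x i.castSucc = i + 1)
  (hx_last : x (Fin.last n) = X)
include hx_cast hx_last

omit hX in
lemma rss_single_last (Y : ℝ) (β : ℝ × ℝ) :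
    rss x (Pi.single (Fin.last n) Y) β
      = ∑ i : Fin n, (β.1 * (i + 1) + β.2) ^ 2 + (Y - (β.1 * X + β.2)) ^ 2 := by
  unfold rss
  rw [Fin.sum_univ_castSucc, Pi.single_eq_same, hx_last]
  congr 1
  refine sum_congr rfl fun i _ => ?_
  rw [Pi.single_eq_of_ne (Fin.castSucc_ne_last i), hx_cast]
  ring

lemma sq_add_sq_le_rss_single_last (hn : 2 ≤ n) (Y : ℝ) (β : ℝ × ℝ) :
    (β.1 * X + β.2) ^ 2 + (Y - (β.1 * X + β.2)) ^ 2
      ≤ rss x (Pi.single (Fin.last n) Y) β := by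
  rw [rss_single_last hx_cast hx_last]
  gcongr
  exact sq_le_sum_fin_affine_sq hX hn β.1 β.2

lemma iInf_rss_single_last (hn : 3 ≤ n) (Y : ℝ) :
    ⨅ β, rss x (Pi.single (Fin.last n) Y) β = Y ^ 2 / 2 := by
  refine le_antisymm ?_ (le_ciInf fun β => ?_)
  · obtain ⟨u, v, hline, hsum⟩ := exists_sum_fin_affine_sq_eq_sq hX hn (Y / 2)
    have hbdd : BddBelow (Set.range (rss x (Pi.single (Fin.last n) Y))) :=
      ⟨0, by rintro _ ⟨β, rfl⟩; exact sum_nonneg fun i _ => sq_nonneg _⟩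
    calc ⨅ β, rss x (Pi.single (Fin.last n) Y) β
        ≤ rss x (Pi.single (Fin.last n) Y) (u, v) := ciInf_le hbdd (u, v)
      _ = Y ^ 2 / 2 := by
        rw [rss_single_last hx_cast hx_last, hline, hsum]
        ring
  · have h := sq_add_sq_le_rss_single_last hX hx_cast hx_last (by omega) Y β
    nlinarith [sq_nonneg (β.1 * X + β.2 - Y / 2)]

theorem exists_pos_two_mul_iInf_rss_single_last_le (hn : 3 ≤ n)
    (M : (Fin (n + 1) → ℝ) → ℝ × ℝ)
    (hSP : ∀ (y : Fin (n + 1) → ℝ) (i : Fin (n + 1)) (y' : ℝ),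
      WeaklyPrefers (y i) ((M y).1 * x i + (M y).2)
        ((M (Function.update y i y')).1 * x i + (M (Function.update y i y')).2)) :
    ∃ Y, 0 < Y ∧ 2 * ⨅ β, rss x (Pi.single (Fin.last n) Y) β
      ≤ rss x (Pi.single (Fin.last n) Y) (M (Pi.single (Fin.last n) Y)) := by
  set a : ℝ → ℝ := fun Y =>
    (M (Pi.single (Fin.last n) Y)).1 * X + (M (Pi.single (Fin.last n) Y)).2
  have ha : ∀ Y Y', WeaklyPrefers Y (a Y) (a Y') := fun Y Y' => by
    have hupd : Function.update (Pi.single (Fin.last n) Y : Fin (n + 1) → ℝ) (Fin.last n) Y'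
        = Pi.single (Fin.last n) Y' := Function.update_idem _ _ _
    have h := hSP (Pi.single (Fin.last n) Y) (Fin.last n) Y'
    rwa [hupd, Pi.single_eq_same, hx_last] at h
  obtain ⟨Y, hY, hout⟩ := exists_pos_notMem_Ioo_of_weaklyPrefers ha
  refine ⟨Y, hY, ?_⟩
  have hprod : 0 ≤ a Y * (a Y - Y) := by
    by_contra! hneg
    exact hout ⟨by nlinarith, by nlinarith⟩
  calc 2 * ⨅ β, rss x (Pi.single (Fin.last n) Y) β
      = Y ^ 2 := by rw [iInf_rss_single_last hX hx_cast hx_last hn]; ring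
    _ ≤ a Y ^ 2 + (Y - a Y) ^ 2 := by nlinarith
    _ ≤ _ := sq_add_sq_le_rss_single_last hX hx_cast hx_last (by omega) Y _

end BalancedAbscissa

/-- Lower bound on efficiency: for the configuration `x i = i` for `i ∈ [n]` (`n ≥ 3`)
and `x (n+1) = X` with `X` solving `(n³−n)/(2(1+3n+2n²+6X²−6Xn−6X)) = 1`, every
strategyproof mechanism for simple linear regression admits an input on which its
residual sum of squares is at least twice the optimum. -/
theorem stmt16 (n : ℕ) (hn : 3 ≤ n) (X : ℝ)
    (hX : (n : ℝ) ^ 3 - n =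
      2 * (1 + 3 * n + 2 * (n : ℝ) ^ 2 + 6 * X ^ 2 - 6 * X * n - 6 * X))
    (x : Fin (n + 1) → ℝ)
    (hx : ∀ i : Fin (n + 1), x i = if (i : ℕ) < n then ((i : ℕ) + 1 : ℝ) else X)
    (M : (Fin (n + 1) → ℝ) → ℝ × ℝ)
    (hSP : ∀ (y : Fin (n + 1) → ℝ) (i : Fin (n + 1)) (y' : ℝ),
      WeaklyPrefers (y i) ((M y).1 * x i + (M y).2)
        ((M (Function.update y i y')).1 * x i + (M (Function.update y i y')).2)) :
    ∃ y : Fin (n + 1) → ℝ,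
      (∑ i, (y i - ((M y).1 * x i + (M y).2)) ^ 2) ≥
        2 * ⨅ β : ℝ × ℝ, ∑ i, (y i - (β.1 * x i + β.2)) ^ 2 := by
  have hx_cast : ∀ i : Fin n, x i.castSucc = i + 1 := fun i => by simp [hx]
  have hx_last : x (Fin.last n) = X := by simp [hx]
  obtain ⟨Y, -, hY⟩ :=
    exists_pos_two_mul_iInf_rss_single_last_le hX hx_cast hx_last hn M hSP
  exact ⟨_, hY⟩
end

section
/- With y_i = 0 for i ∈ [n] at x_i = i and the constraint that the line passes through (X, Y) (i.e., β₁X + β₀ = Y), the minimum of Σ_{i=1}^{n} (β₁ i + β₀)² over lines satisfying the constraint equals Y² · (n³ − n) / (2(1 + 3n + 2n² + 6X² − 6Xn − 6X)). -/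
/-!
Writing the constrained line as `b ↦ b (i - X) + Y`, the residual sum of squares is a quadratic
`S₂ b² + 2 Y S₁ b + n Y²` in the slope, with `S₁ = ∑ (i - X)` and `S₂ = ∑ (i - X)²` given by the
closed forms of `∑ i` and `∑ i²`. Its minimum is `n Y² - Y² S₁² / S₂`, which simplifies to the
stated value because `2 D - 3 (n + 1 - 2X)² = n² - 1` for the denominator `D`.
-/

open Finset

theorem isLeast_range_quadratic {a : ℝ} (ha : 0 < a) (b c : ℝ) :
    IsLeast (Set.range fun x => a * x ^ 2 + b * x + c) (c - b ^ 2 / (4 * a)) := by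
  have h_complete_square (x : ℝ) :
      a * x ^ 2 + b * x + c = a * (x + b / (2 * a)) ^ 2 + (c - b ^ 2 / (4 * a)) := by
    field_simp
    ring
  refine ⟨⟨-(b / (2 * a)), by simp only [h_complete_square]; ring⟩, ?_⟩
  rintro _ ⟨x, rfl⟩
  dsimp only
  rw [h_complete_square]
  nlinarith [mul_nonneg ha.le (sq_nonneg (x + b / (2 * a)))]

theorem sum_mul_add_sq {ι : Type*} (s : Finset ι) (t : ι → ℝ) (b y : ℝ) :
    ∑ i ∈ s, (b * t i + y) ^ 2 =
      (∑ i ∈ s, t i ^ 2) * b ^ 2 + (2 * y * ∑ i ∈ s, t i) * b + #s * y ^ 2 := by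
  simp only [add_sq, sum_add_distrib, mul_pow, sum_mul, mul_sum, sum_const, nsmul_eq_mul]
  congr 1
  congr 1 <;> exact sum_congr rfl fun i _ => by ring

theorem sum_range_succ_sub (n : ℕ) (X : ℝ) :
    ∑ i ∈ range n, ((i : ℝ) + 1 - X) = n * (n + 1 - 2 * X) / 2 := by
  induction n with
  | zero => simp
  | succ k ih => rw [sum_range_succ, ih]; push_cast; ring

theorem sum_range_succ_sub_sq (n : ℕ) (X : ℝ) :
    ∑ i ∈ range n, ((i : ℝ) + 1 - X) ^ 2 =
      n * (1 + 3 * n + 2 * (n : ℝ) ^ 2 + 6 * X ^ 2 - 6 * X * n - 6 * X) / 6 := by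
  induction n with
  | zero => simp
  | succ k ih => rw [sum_range_succ, ih]; push_cast; ring

/-- Constrained least squares: with `n` points `(i, 0)`, `i = 1, …, n`, the minimum of the
residual sum of squares over lines passing through `(X, Y)` (substituting
`β₀ = Y − β₁X`) equals `Y² (n³ − n) / (2(1 + 3n + 2n² + 6X² − 6Xn − 6X))`. -/
theorem stmt18 (n : ℕ) (hn : 3 ≤ n) (X Y : ℝ) :
    IsLeast
      {v : ℝ | ∃ b1 : ℝ,
        v = ∑ i ∈ Finset.range n, (b1 * ((i : ℝ) + 1) + (Y - b1 * X)) ^ 2}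
      (Y ^ 2 * ((n : ℝ) ^ 3 - n) /
        (2 * (1 + 3 * n + 2 * (n : ℝ) ^ 2 + 6 * X ^ 2 - 6 * X * n - 6 * X))) := by
  set D : ℝ := 1 + 3 * n + 2 * (n : ℝ) ^ 2 + 6 * X ^ 2 - 6 * X * n - 6 * X
  have hn' : (3 : ℝ) ≤ n := by exact_mod_cast hn
  -- `D = 6 (X - (n + 1) / 2) ^ 2 + (n ^ 2 - 1) / 2`
  have hD_pos : 0 < D := by nlinarith [sq_nonneg (2 * X - n - 1)]
  have h_set : {v : ℝ | ∃ b1 : ℝ,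
      v = ∑ i ∈ range n, (b1 * ((i : ℝ) + 1) + (Y - b1 * X)) ^ 2} =
      Set.range fun b => n * D / 6 * b ^ 2 + Y * n * (n + 1 - 2 * X) * b + n * Y ^ 2 := by
    ext v
    simp only [Set.mem_ofPred_eq, Set.mem_range, eq_comm (a := v)]
    refine exists_congr fun b => ?_
    have h_line : ∀ i : ℕ, b * ((i : ℝ) + 1) + (Y - b * X) = b * ((i : ℝ) + 1 - X) + Y :=
      fun i => by ring
    simp only [h_line, sum_mul_add_sq, sum_range_succ_sub, sum_range_succ_sub_sq, card_range]
    constructor <;> rintro rfl <;> ring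
  rw [h_set]
  convert isLeast_range_quadratic (a := n * D / 6) (by positivity) (Y * n * (n + 1 - 2 * X))
    (n * Y ^ 2) using 1
  field_simp
  ring
end

section
/- In two dimensions (d = 1), two finite sets S, S' ⊂ ℝ² that are separable by a vertical line (max x-coordinate of one is strictly less than min x-coordinate of the other) have x-coordinate projections that are well separable in ℝ¹; consequently, for any k ∈ [|S|], k' ∈ [|S'|] and any assignment of y-values, there is a unique line making the k-th smallest residual in S and the k'-th smallest residual in S' both zero. -/
/-!
For slope `t`, let `F t` (resp. `G t`) be the intercept for which the `k`-th smallest residual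
on `S` (resp. the `k'`-th on `S'`) vanishes; the wanted lines are `(t, F t)` with `F t = G t`.
Moving the slope from `t₁` to `t₂ > t₁` lowers every residual at `i` by `(t₂ - t₁) * x i`, so
`F - G` is continuous and increases at rate at least `min x(S') - max x(S) > 0`: it has exactly
one root.
-/

/-- The `k`-th smallest value of the multiset `{r i : i ∈ s}` (1-indexed). -/
noncomputable def kthSmallest {n : ℕ} (s : Finset (Fin n)) (r : Fin n → ℝ) (k : ℕ) : ℝ :=
  (Multiset.sort (s.val.map r) (· ≤ ·)).getD (k - 1) 0

open Finset Filter

theorem List.SortedLE.getElem_le_iff_lt_countP {α : Type*} [LinearOrder α] {l : List α}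
    (hl : l.SortedLE) {i : ℕ} (hi : i < l.length) (v : α) :
    l[i] ≤ v ↔ i < l.countP (· ≤ v) := by
  constructor
  · intro hv
    have hprefix : (l.take (i + 1)).countP (· ≤ v) = i + 1 := by
      rw [List.countP_eq_length.mpr, List.length_take_of_le hi]
      intro a ha
      obtain ⟨j, hj, rfl⟩ := List.getElem_of_mem ha
      rw [List.getElem_take]
      rw [List.length_take_of_le hi] at hj
      simpa using (hl.getElem_le_getElem_of_le (by omega)).trans hv
    have := (List.take_sublist (i + 1) l).countP_le (p := (· ≤ v))
    omega
  · contrapose!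
    intro hv
    have hsuffix : (l.drop i).countP (· ≤ v) = 0 := by
      rw [List.countP_eq_zero]
      intro a ha
      obtain ⟨j, hj, rfl⟩ := List.getElem_of_mem ha
      rw [List.getElem_drop]
      simpa using hv.trans_le (hl.getElem_le_getElem_of_le (by omega))
    calc l.countP (· ≤ v) = (l.take i).countP (· ≤ v) := by
          conv_lhs => rw [← List.take_append_drop i l, List.countP_append, hsuffix, add_zero]
      _ ≤ i := List.countP_le_length.trans (List.length_take_le _ _)

section kthSmallest

variable {n : ℕ} {s : Finset (Fin n)} {k : ℕ}

theorem kthSmallest_le_iff (hk : 1 ≤ k) (hks : k ≤ #s) (r : Fin n → ℝ) (v : ℝ) :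
    kthSmallest s r k ≤ v ↔ k ≤ #{i ∈ s | r i ≤ v} := by
  set l := (s.val.map r).sort (· ≤ ·)
  have hl : k - 1 < l.length := by rw [Multiset.length_sort, Multiset.card_map, card_val]; omega
  have hcount : l.countP (· ≤ v) = #{i ∈ s | r i ≤ v} := by
    rw [← Multiset.coe_countP, Multiset.sort_eq, Multiset.countP_map]; rfl
  rw [kthSmallest, List.getD_eq_getElem _ _ hl,
    (Multiset.pairwise_sort _ _).sortedLE.getElem_le_iff_lt_countP hl, hcount]
  omega

theorem kthSmallest_mono (hk : 1 ≤ k) (hks : k ≤ #s) {r r' : Fin n → ℝ}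
    (h : ∀ i ∈ s, r i ≤ r' i) : kthSmallest s r k ≤ kthSmallest s r' k := by
  rw [kthSmallest_le_iff hk hks]
  refine ((kthSmallest_le_iff hk hks r' _).mp le_rfl).trans (card_le_card fun i => ?_)
  simp only [mem_filter]
  exact fun ⟨hi, hle⟩ => ⟨hi, (h i hi).trans hle⟩

theorem kthSmallest_add_const (hk : 1 ≤ k) (hks : k ≤ #s) (r : Fin n → ℝ) (c : ℝ) :
    kthSmallest s (fun i => r i + c) k = kthSmallest s r k + c :=
  eq_of_forall_ge_iff fun v => by
    simp_rw [kthSmallest_le_iff hk hks, ← le_sub_iff_add_le, kthSmallest_le_iff hk hks]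

end kthSmallest

/-- The intercept of the line of slope `t` whose `k`-th smallest residual on `s` is zero. -/
noncomputable def kthIntercept {n : ℕ} (s : Finset (Fin n)) (x y : Fin n → ℝ) (k : ℕ) (t : ℝ) :
    ℝ :=
  kthSmallest s (fun i => y i - t * x i) k

section kthIntercept

variable {n : ℕ} {s : Finset (Fin n)} {x y : Fin n → ℝ} {k : ℕ}

theorem kthSmallest_residual_eq (hk : 1 ≤ k) (hks : k ≤ #s) (a b : ℝ) :
    kthSmallest s (fun i => y i - (a * x i + b)) k = kthIntercept s x y k a - b := by
  rw [kthIntercept, sub_eq_add_neg _ b, ← kthSmallest_add_const hk hks]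
  congr 1
  ext i
  ring

theorem kthIntercept_sub_mul_le (hk : 1 ≤ k) (hks : k ≤ #s) {M : ℝ} (hM : ∀ i ∈ s, x i ≤ M)
    {t₁ t₂ : ℝ} (ht : t₁ ≤ t₂) :
    kthIntercept s x y k t₁ - (t₂ - t₁) * M ≤ kthIntercept s x y k t₂ := by
  rw [kthIntercept, kthIntercept, sub_eq_add_neg (kthSmallest _ _ k),
    ← kthSmallest_add_const hk hks]
  refine kthSmallest_mono hk hks fun i hi => ?_
  nlinarith [mul_le_mul_of_nonneg_left (hM i hi) (sub_nonneg.2 ht)]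

theorem kthIntercept_le_sub_mul (hk : 1 ≤ k) (hks : k ≤ #s) {m : ℝ} (hm : ∀ i ∈ s, m ≤ x i)
    {t₁ t₂ : ℝ} (ht : t₁ ≤ t₂) :
    kthIntercept s x y k t₂ ≤ kthIntercept s x y k t₁ - (t₂ - t₁) * m := by
  rw [kthIntercept, kthIntercept, sub_eq_add_neg (kthSmallest _ _ k),
    ← kthSmallest_add_const hk hks]
  refine kthSmallest_mono hk hks fun i hi => ?_
  nlinarith [mul_le_mul_of_nonneg_left (hm i hi) (sub_nonneg.2 ht)]

theorem continuous_kthIntercept (hk : 1 ≤ k) (hks : k ≤ #s) :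
    Continuous (kthIntercept s x y k) := by
  set B := ∑ i ∈ s, |x i|
  have hB : ∀ i ∈ s, |x i| ≤ B := fun i hi =>
    single_le_sum (f := fun i => |x i|) (fun j _ => abs_nonneg (x j)) hi
  refine (LipschitzWith.of_le_add_mul ⟨B, sum_nonneg fun i _ => abs_nonneg (x i)⟩
    fun t₁ t₂ => ?_).continuous
  change kthIntercept s x y k t₁ ≤ kthIntercept s x y k t₂ + B * |t₁ - t₂|
  rcases le_total t₁ t₂ with ht | ht
  · have := kthIntercept_sub_mul_le (y := y) hk hks (fun i hi => (abs_le.1 (hB i hi)).2) ht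
    rw [abs_of_nonpos (sub_nonpos.2 ht)]
    linarith
  · have := kthIntercept_le_sub_mul (y := y) hk hks (fun i hi => (abs_le.1 (hB i hi)).1) ht
    rw [abs_of_nonneg (sub_nonneg.2 ht)]
    linarith

end kthIntercept

theorem Continuous.bijective_of_add_mul_le {f : ℝ → ℝ} (hf : Continuous f) {c : ℝ}
    (hc : 0 < c) (h : ∀ s t, s ≤ t → f s + c * (t - s) ≤ f t) : Function.Bijective f := by
  refine ⟨StrictMono.injective fun s t hst => ?_, hf.surjective ?_ ?_⟩
  · linarith [h s t hst.le, mul_pos hc (sub_pos.2 hst)]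
  · refine tendsto_atTop_mono' _ ?_
      (tendsto_atTop_add_const_left _ (f 0) (tendsto_id.const_mul_atTop hc))
    filter_upwards [eventually_ge_atTop 0] with t ht
    simp only [id_eq]
    linarith [h 0 t ht]
  · refine tendsto_atBot_mono' _ ?_
      (tendsto_atBot_add_const_left _ (f 0) (tendsto_id.const_mul_atBot hc))
    filter_upwards [eventually_le_atBot 0] with t ht
    simp only [id_eq]
    linarith [h t 0 ht]

theorem existsUnique_line_kthSmallest_residual_eq_zero {n : ℕ} (x y : Fin n → ℝ)
    {S S' : Finset (Fin n)} (hS : S.Nonempty) (hS' : S'.Nonempty)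
    (hsep : ∀ i ∈ S, ∀ j ∈ S', x i < x j) {k k' : ℕ} (hk : 1 ≤ k) (hkS : k ≤ #S)
    (hk' : 1 ≤ k') (hkS' : k' ≤ #S') :
    ∃! β : ℝ × ℝ,
      kthSmallest S (fun i => y i - (β.1 * x i + β.2)) k = 0 ∧
      kthSmallest S' (fun i => y i - (β.1 * x i + β.2)) k' = 0 := by
  set F := kthIntercept S x y k
  set G := kthIntercept S' x y k'
  have hgap : S.sup' hS x < S'.inf' hS' x :=
    (sup'_lt_iff hS).2 fun i hi => (lt_inf'_iff hS').2 (hsep i hi)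
  have hbij : Function.Bijective (F - G) := by
    refine (continuous_kthIntercept hk hkS).sub (continuous_kthIntercept hk' hkS')
      |>.bijective_of_add_mul_le (sub_pos.2 hgap) fun t₁ t₂ ht => ?_
    have hF := kthIntercept_sub_mul_le (y := y) (M := S.sup' hS x) hk hkS
      (fun i hi => le_sup' x hi) ht
    have hG := kthIntercept_le_sub_mul (y := y) (m := S'.inf' hS' x) hk' hkS'
      (fun i hi => inf'_le x hi) ht
    simp only [Pi.sub_apply]
    linarith
  obtain ⟨t, ht, hunique⟩ := hbij.existsUnique 0
  have hFG : ∀ t, (F - G) t = 0 ↔ G t = F t := fun t => by simp [sub_eq_zero, eq_comm]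
  simp only [kthSmallest_residual_eq hk hkS, kthSmallest_residual_eq hk' hkS', sub_eq_zero]
  refine ⟨(t, F t), ⟨rfl, (hFG t).1 ht⟩, fun ⟨a, b⟩ ⟨hFa, hGa⟩ => ?_⟩
  obtain rfl : a = t := hunique a ((hFG a).2 (hGa.trans hFa.symm))
  exact Prod.ext rfl hFa.symm

/-- In two dimensions, if the index sets `S, S'` are separable by a vertical line, then
their x-coordinate projections are well separable in `ℝ¹` (one lies entirely below the
other), and for any `k ∈ [|S|]`, `k' ∈ [|S'|]` there is a unique line making the `k`-th
smallest residual in `S` and the `k'`-th smallest residual in `S'` both zero. -/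
theorem stmt19 (n : ℕ) (x y : Fin n → ℝ) (S S' : Finset (Fin n))
    (hS : S.Nonempty) (hS' : S'.Nonempty)
    (hsep : (∀ i ∈ S, ∀ j ∈ S', x i < x j) ∨ (∀ j ∈ S', ∀ i ∈ S, x j < x i))
    (k k' : ℕ) (hk : 1 ≤ k ∧ k ≤ S.card) (hk' : 1 ≤ k' ∧ k' ≤ S'.card) :
    ((∀ a ∈ x '' ↑S, ∀ b ∈ x '' ↑S', a < b) ∨
      (∀ a ∈ x '' ↑S, ∀ b ∈ x '' ↑S', b < a)) ∧
    ∃! β : ℝ × ℝ,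
      kthSmallest S (fun i => y i - (β.1 * x i + β.2)) k = 0 ∧
      kthSmallest S' (fun i => y i - (β.1 * x i + β.2)) k' = 0 := by
  rcases hsep with hlt | hgt
  · refine ⟨Or.inl ?_, existsUnique_line_kthSmallest_residual_eq_zero x y hS hS' hlt
      hk.1 hk.2 hk'.1 hk'.2⟩
    rintro _ ⟨i, hi, rfl⟩ _ ⟨j, hj, rfl⟩
    exact hlt i hi j hj
  · refine ⟨Or.inr ?_, (existsUnique_congr fun β => and_comm).1
      (existsUnique_line_kthSmallest_residual_eq_zero x y hS' hS hgt hk'.1 hk'.2 hk.1 hk.2)⟩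
    rintro _ ⟨i, hi, rfl⟩ _ ⟨j, hj, rfl⟩
    exact hgt j hj i hi
end
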